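/- arXiv:2012.14665 — 2 statements merged into one kernel-verified Lean document; each statement's English description precedes it below -/
import Mathlib

section
/- Let x : [-h_M, T] → ℝⁿ with T ≥ h_M be continuous, continuously differentiable on [0, T], and suppose ‖x'(t)‖ ≤ L · sup_{s ∈ [t - h_M, t]} ‖x(s)‖ for all t ∈ [0, T]. Then the shifted segment x_{h_M} : [-h_M, 0] → ℝⁿ, x_{h_M}(τ) = x(h_M + τ), belongs to W and ‖x_{h_M}‖_W ≤ (1 + e^{L h_M}) √(1 + h_M L²) · ‖x_0‖_∞, where x_0 is the restriction of x to [-h_M, 0]. -/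
open MeasureTheory Real Set intervalIntegral

/-!
With `M = ‖x₀‖_∞` and `ψ(t) = ∫₀ᵗ ‖x'‖`, every point of the window `[t - h_M, t]` satisfies
`‖x(s)‖ ≤ M + ψ(t)`, because `ψ` is nondecreasing. So `ψ' ≤ L (M + ψ)` and Gronwall's inequality
gives `ψ(t) ≤ M (e^{L t} - 1)`. Hence `‖x‖ ≤ M e^{L h_M}` and `‖x'‖ ≤ L M e^{L h_M}` on `[0, h_M]`,
which bounds both terms of the `W`-norm.
-/

theorem gronwallBound_zero_mul (K C x : ℝ) :
    gronwallBound 0 K (K * C) x = C * (exp (K * x) - 1) := by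
  rcases eq_or_ne K 0 with rfl | hK
  · simp [gronwallBound_K0]
  · rw [gronwallBound_of_K_ne_0 hK]
    field_simp
    ring

theorem integral_le_mul_exp_sub_one_of_le_mul_add_integral {g : ℝ → ℝ} {K C a b : ℝ}
    (hg : ContinuousOn g (Icc a b))
    (hle : ∀ t ∈ Ico a b, g t ≤ K * (C + ∫ s in a..t, g s)) :
    ∀ t ∈ Icc a b, ∫ s in a..t, g s ≤ C * (exp (K * (t - a)) - 1) := by
  intro t ht
  have hderiv : ∀ u ∈ Icc a b,
      HasDerivWithinAt (fun u => ∫ s in a..u, g s) (g u) (Icc a b) u := by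
    intro u hu
    have : Fact (u ∈ Icc a b) := ⟨hu⟩
    exact integral_hasDerivWithinAt_right
      ((hg.mono (uIcc_subset_Icc (left_mem_Icc.2 (hu.1.trans hu.2)) hu)).intervalIntegrable)
      (hg.stronglyMeasurableAtFilter_nhdsWithin measurableSet_Icc u) (hg u hu)
  rw [← gronwallBound_zero_mul]
  refine le_gronwallBound_of_liminf_deriv_right_le (f' := g)
    (fun u hu => (hderiv u hu).continuousWithinAt)
    (fun u hu r hr => ?_) (by simp) (fun u hu => by linarith [hle u hu]) t ht
  exact ((hderiv u (Ico_subset_Icc_self hu)).mono_of_mem_nhdsWithin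
    (Icc_mem_nhdsGE_of_mem hu)).liminf_right_slope_le hr

section

variable {E : Type*} [NormedAddCommGroup E]

theorem sqrt_norm_sq_add_integral_norm_sq_le {v : E} {u : ℝ → E} {h K B : ℝ} (hh : 0 ≤ h)
    (hu : IntervalIntegrable (fun τ => ‖u τ‖ ^ 2) volume (-h) 0)
    (hv : ‖v‖ ≤ B) (huB : ∀ τ ∈ Icc (-h) 0, ‖u τ‖ ≤ K * B) :
    √(‖v‖ ^ 2 + ∫ τ in (-h)..0, ‖u τ‖ ^ 2) ≤ √(1 + h * K ^ 2) * B := by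
  have hB : 0 ≤ B := (norm_nonneg v).trans hv
  have hint : ∫ τ in (-h)..0, ‖u τ‖ ^ 2 ≤ h * (K * B) ^ 2 := by
    calc ∫ τ in (-h)..0, ‖u τ‖ ^ 2 ≤ ∫ _ in (-h)..0, (K * B) ^ 2 :=
          integral_mono_on (by linarith) hu intervalIntegrable_const
            fun τ hτ => pow_le_pow_left₀ (norm_nonneg _) (huB τ hτ) 2
      _ = h * (K * B) ^ 2 := by simp
  have hv2 : ‖v‖ ^ 2 ≤ B ^ 2 := pow_le_pow_left₀ (norm_nonneg _) hv 2
  calc √(‖v‖ ^ 2 + ∫ τ in (-h)..0, ‖u τ‖ ^ 2) ≤ √((1 + h * K ^ 2) * B ^ 2) :=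
        Real.sqrt_le_sqrt (by linarith)
    _ = √(1 + h * K ^ 2) * B := by
        rw [Real.sqrt_mul (by positivity), Real.sqrt_sq hB]

variable [NormedSpace ℝ E] [CompleteSpace E]

theorem integral_eq_sub_of_hasDerivWithinAt_Icc {f f' : ℝ → E} {a b c d : ℝ}
    (hf' : ContinuousOn f' (Icc a b))
    (hderiv : ∀ t ∈ Icc a b, HasDerivWithinAt f (f' t) (Icc a b) t)
    (hac : a ≤ c) (hcd : c ≤ d) (hdb : d ≤ b) :
    ∫ t in c..d, f' t = f d - f c := by
  have hsub : Icc c d ⊆ Icc a b := Icc_subset_Icc hac hdb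
  refine integral_eq_sub_of_hasDeriv_right_of_le hcd
    (fun t ht => (hderiv t (hsub ht)).continuousWithinAt.mono hsub) (fun t ht => ?_)
    ((hf'.mono hsub).intervalIntegrable_of_Icc hcd)
  exact ((hderiv t (hsub (Ioo_subset_Icc_self ht))).hasDerivAt
    (Icc_mem_nhds (hac.trans_lt ht.1) (ht.2.trans_le hdb))).hasDerivWithinAt

theorem norm_le_norm_add_integral_norm_deriv {f f' : ℝ → E} {a b t : ℝ}
    (hf' : ContinuousOn f' (Icc a b))
    (hderiv : ∀ t ∈ Icc a b, HasDerivWithinAt f (f' t) (Icc a b) t) (ht : t ∈ Icc a b) :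
    ‖f t‖ ≤ ‖f a‖ + ∫ s in a..t, ‖f' s‖ := by
  have hft : f t = f a + ∫ s in a..t, f' s := by
    rw [integral_eq_sub_of_hasDerivWithinAt_Icc hf' hderiv le_rfl ht.1 ht.2, add_sub_cancel]
  rw [hft]
  exact (norm_add_le _ _).trans
    (add_le_add_right (intervalIntegral.norm_integral_le_integral_norm ht.1) _)

theorem norm_le_mul_exp_of_norm_deriv_le_mul_iSup {x x' : ℝ → E} {h b L M t : ℝ}
    (hh : 0 ≤ h) (hL : 0 ≤ L) (hhist : ∀ s ∈ Icc (-h) 0, ‖x s‖ ≤ M)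
    (hx' : ContinuousOn x' (Icc 0 b))
    (hderiv : ∀ t ∈ Icc 0 b, HasDerivWithinAt x (x' t) (Icc 0 b) t)
    (hbound : ∀ t ∈ Icc 0 b, ‖x' t‖ ≤ L * ⨆ s : Icc (t - h) t, ‖x s‖) (ht : t ∈ Icc 0 b) :
    ‖x t‖ ≤ M * exp (L * t) ∧ ‖x' t‖ ≤ L * (M * exp (L * t)) := by
  set ψ : ℝ → ℝ := fun t => ∫ s in (0 : ℝ)..t, ‖x' s‖
  have hψ_mono : ∀ s t, 0 ≤ s → s ≤ t → t ≤ b → ψ s ≤ ψ t := fun s t hs hst htb =>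
    integral_mono_interval le_rfl hs hst (Filter.Eventually.of_forall fun _ => norm_nonneg _)
      ((hx'.norm.mono (Icc_subset_Icc_right htb)).intervalIntegrable_of_Icc (hs.trans hst))
  have hx_le : ∀ s ∈ Icc 0 b, ‖x s‖ ≤ M + ψ s := fun s hs =>
    (norm_le_norm_add_integral_norm_deriv hx' hderiv hs).trans
      (add_le_add_left (hhist 0 ⟨neg_nonpos.2 hh, le_rfl⟩) _)
  have hwindow : ∀ t ∈ Icc 0 b, ⨆ s : Icc (t - h) t, ‖x s‖ ≤ M + ψ t := by
    intro t ht
    have : Nonempty (Icc (t - h) t) := nonempty_Icc_subtype (by linarith)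
    refine ciSup_le fun ⟨s, hs⟩ => ?_
    rcases le_or_gt s 0 with hs0 | hs0
    · have hψ0 : 0 ≤ ψ t := by simpa [ψ] using hψ_mono 0 t le_rfl ht.1 ht.2
      linarith [hhist s ⟨by linarith [hs.1, ht.1], hs0⟩]
    · linarith [hx_le s ⟨hs0.le, hs.2.trans ht.2⟩, hψ_mono s t hs0.le hs.2 ht.2]
  have hderiv_le : ∀ t ∈ Icc 0 b, ‖x' t‖ ≤ L * (M + ψ t) := fun t ht =>
    (hbound t ht).trans (mul_le_mul_of_nonneg_left (hwindow t ht) hL)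
  have hψ : ψ t ≤ M * (exp (L * t) - 1) := by
    simpa using integral_le_mul_exp_sub_one_of_le_mul_add_integral hx'.norm
      (fun t ht => hderiv_le t (Ico_subset_Icc_self ht)) t ht
  exact ⟨by linarith [hx_le t ht], by nlinarith [hderiv_le t ht]⟩

end

/-- if `x : [-h_M, T] → ℝⁿ` (with `T ≥ h_M`) is continuous, continuously
differentiable on `[0,T]` with `‖x'(t)‖ ≤ L sup_{s∈[t-h_M,t]} ‖x(s)‖`, then the
shifted segment `x_{h_M}(τ) = x(h_M + τ)` belongs to `W` and
`‖x_{h_M}‖_W ≤ (1 + e^{L h_M}) √(1 + h_M L²) ‖x₀‖_∞`. -/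
theorem shifted_segment_in_W_and_bound {n : ℕ} (hM L T : ℝ)
    (hhM : 0 < hM) (hL : 0 < L) (hT : hM ≤ T)
    (x x' : ℝ → EuclideanSpace ℝ (Fin n))
    (hx : ContinuousOn x (Set.Icc (-hM) T))
    (hx' : ContinuousOn x' (Set.Icc (0:ℝ) T))
    (hderiv : ∀ t ∈ Set.Icc (0:ℝ) T, HasDerivWithinAt x (x' t) (Set.Icc (0:ℝ) T) t)
    (hbound : ∀ t ∈ Set.Icc (0:ℝ) T,
      ‖x' t‖ ≤ L * ⨆ s : Set.Icc (t - hM) t, ‖x s‖) :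
    IntegrableOn (fun τ => ‖x' (hM + τ)‖ ^ 2) (Set.Icc (-hM) 0) ∧
    (∀ τ ∈ Set.Icc (-hM) 0,
      x (hM + 0) - x (hM + τ) = ∫ s in τ..0, x' (hM + s)) ∧
    Real.sqrt (‖x hM‖ ^ 2 + ∫ τ in (-hM)..0, ‖x' (hM + τ)‖ ^ 2) ≤
      (1 + Real.exp (L * hM)) * Real.sqrt (1 + hM * L ^ 2) *
        ⨆ s : Set.Icc (-hM) (0:ℝ), ‖x s‖ := by
  set M := ⨆ s : Icc (-hM) (0:ℝ), ‖x s‖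
  have hxM : ∀ s ∈ Icc (-hM) 0, ‖x s‖ ≤ M := by
    have hbdd := (isCompact_Icc.image_of_continuousOn
      (hx.mono (Icc_subset_Icc_right (hhM.le.trans hT))).norm).bddAbove
    exact fun s hs => le_ciSup (f := fun s : Icc (-hM) (0:ℝ) => ‖x s‖)
      (by rwa [image_eq_range] at hbdd) ⟨s, hs⟩
  have hM0 : 0 ≤ M := (norm_nonneg _).trans (hxM 0 ⟨neg_nonpos.2 hhM.le, le_rfl⟩)
  have hx'_hM : ContinuousOn x' (Icc 0 hM) := hx'.mono (Icc_subset_Icc_right hT)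
  have hderiv_hM : ∀ t ∈ Icc 0 hM, HasDerivWithinAt x (x' t) (Icc 0 hM) t := fun t ht =>
    (hderiv t ⟨ht.1, ht.2.trans hT⟩).mono (Icc_subset_Icc_right hT)
  have hest := fun t (ht : t ∈ Icc 0 hM) => norm_le_mul_exp_of_norm_deriv_le_mul_iSup hhM.le
    hL.le hxM hx'_hM hderiv_hM (fun t ht => hbound t ⟨ht.1, ht.2.trans hT⟩) ht
  have hshift : MapsTo (hM + ·) (Icc (-hM) 0) (Icc 0 hM) := fun τ hτ =>
    ⟨by linarith [hτ.1], by linarith [hτ.2]⟩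
  have hsq : ContinuousOn (fun τ => ‖x' (hM + τ)‖ ^ 2) (Icc (-hM) 0) :=
    (hx'_hM.comp (continuous_const_add hM).continuousOn hshift).norm.pow 2
  refine ⟨hsq.integrableOn_Icc, fun τ hτ => ?_, ?_⟩
  · rw [integral_comp_add_left, integral_eq_sub_of_hasDerivWithinAt_Icc hx'_hM hderiv_hM
      (hshift hτ).1 (by linarith [hτ.2]) (by linarith)]
  · calc √(‖x hM‖ ^ 2 + ∫ τ in (-hM)..0, ‖x' (hM + τ)‖ ^ 2)
        ≤ √(1 + hM * L ^ 2) * (M * exp (L * hM)) :=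
          sqrt_norm_sq_add_integral_norm_sq_le hhM.le
            (hsq.intervalIntegrable_of_Icc (by linarith)) (hest hM ⟨hhM.le, le_rfl⟩).1
            fun τ hτ => (hest _ (hshift hτ)).2.trans (by gcongr; linarith [hτ.2])
      _ ≤ (1 + exp (L * hM)) * √(1 + hM * L ^ 2) * M := by
          nlinarith [mul_nonneg (Real.sqrt_nonneg (1 + hM * L ^ 2)) hM0]
end

section
/- Suppose the retarded system ẋ(t) = f(ζ(t), x_t), x|_{[-h_M,0]} = x_0, is (W, H)-stable with class-K function α and radius R, and suppose f is globally Lipschitz in its second argument with constant L uniformly in the first argument, with f(·, 0) = 0, and H is forward invariant. Then the system is (C⁰, H)-stable: there exist α̃ ∈ K and R̃ > 0 such that for every continuous initial condition x_0 with ‖x_0‖_∞ < R̃ and every ζ ∈ H, the solution exists on ℝ₊ and satisfies ‖x(t)‖ ≤ α̃(‖x_0‖_∞) for all t ≥ 0; one may take R̃ = R / ((1 + e^{L h_M})√(1 + h_M L²)) and α̃(s) = max(α((1 + e^{L h_M})√(1 + h_M L²) s), (1 + e^{L h_M}) s). -/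
open MeasureTheory Real Set intervalIntegral

/-- Sup norm of a function over the delay window `[-h_M, 0]`. -/
noncomputable def segSup {n : ℕ} (hM : ℝ) (φ : ℝ → EuclideanSpace ℝ (Fin n)) : ℝ :=
  ⨆ τ : Set.Icc (-hM) (0:ℝ), ‖φ τ‖

/-- The segment `x_t = x(t + ·)`. -/
def seg {n : ℕ} (x : ℝ → EuclideanSpace ℝ (Fin n)) (t : ℝ) :
    ℝ → EuclideanSpace ℝ (Fin n) := fun τ => x (t + τ)

/-- Global solution of the retarded equation `ẋ(t) = f(ζ(t), x_t)` on `ℝ₊` with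
initial condition `x₀` on `[-h_M, 0]`. -/
def IsSolution {n r : ℕ} (hM : ℝ)
    (f : (Fin r → ℝ) → (ℝ → EuclideanSpace ℝ (Fin n)) → EuclideanSpace ℝ (Fin n))
    (ζ : ℝ → Fin r → ℝ) (x₀ x : ℝ → EuclideanSpace ℝ (Fin n)) : Prop :=
  ContinuousOn x (Set.Ici (-hM)) ∧
  (∀ τ ∈ Set.Icc (-hM) (0:ℝ), x τ = x₀ τ) ∧
  ∀ t ≥ (0:ℝ), HasDerivWithinAt x (f (ζ t) (seg x t)) (Set.Ici t) t

/-- `x₀` is in `W`, with weak derivative `g`. -/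
def InW {n : ℕ} (hM : ℝ) (x₀ g : ℝ → EuclideanSpace ℝ (Fin n)) : Prop :=
  ContinuousOn x₀ (Set.Icc (-hM) 0) ∧
  MeasureTheory.IntegrableOn g (Set.Icc (-hM) 0) ∧
  (∀ t ∈ Set.Icc (-hM) (0:ℝ), x₀ 0 - x₀ t = ∫ s in t..0, g s) ∧
  MeasureTheory.IntegrableOn (fun s => ‖g s‖ ^ 2) (Set.Icc (-hM) 0)

/-- The `W`-norm of `x₀ ∈ W` with weak derivative `g`. -/
noncomputable def Wnorm {n : ℕ} (hM : ℝ) (x₀ g : ℝ → EuclideanSpace ℝ (Fin n)) : ℝ :=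
  Real.sqrt (‖x₀ 0‖ ^ 2 + ∫ s in (-hM)..0, ‖g s‖ ^ 2)

/-- Class `K` comparison function. -/
def ClassK (α : ℝ → ℝ) : Prop :=
  ContinuousOn α (Set.Ici 0) ∧ StrictMonoOn α (Set.Ici 0) ∧ α 0 = 0

/-- Forward invariance of a set of input signals. -/
def FwdInv {r : ℕ} (H : Set (ℝ → Fin r → ℝ)) : Prop :=
  ∀ ζ ∈ H, ∀ a > (0:ℝ), (fun t => ζ (t + a)) ∈ H

/-!
Grönwall's inequality controls the solution on `[0, h_M]`: `‖x t‖ ≤ ‖x₀‖_∞ e^{L t}` and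
`‖ẋ t‖ ≤ L ‖x₀‖_∞ e^{L t}`. Hence the segment `x_{h_M}` lies in `W` with
`‖x_{h_M}‖_W ≤ √(1 + h_M L²) e^{L h_M} ‖x₀‖_∞`, and, `H` being forward invariant, the solution
after time `h_M` is the solution of the shifted system started at `x_{h_M}`, to which
`(W, H)`-stability applies. Solutions with merely continuous initial data exist by Picard
iteration, whose increments are bounded by `‖x₀‖_∞ (L t)ᵏ / k!`.
-/

open Filter Topology

section SegSup

variable {n : ℕ} {hM : ℝ}

local notation "E" => EuclideanSpace ℝ (Fin n)

lemma segSup_nonneg (φ : ℝ → E) : 0 ≤ segSup hM φ :=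
  Real.iSup_nonneg fun _ => norm_nonneg _

lemma segSup_le (hhM : 0 ≤ hM) {φ : ℝ → E} {C : ℝ}
    (h : ∀ τ ∈ Icc (-hM) (0 : ℝ), ‖φ τ‖ ≤ C) : segSup hM φ ≤ C :=
  have : Nonempty (Icc (-hM) (0 : ℝ)) := ⟨⟨0, by simpa using hhM⟩⟩
  ciSup_le fun τ => h τ τ.2

lemma le_segSup {φ : ℝ → E} (hφ : ContinuousOn φ (Icc (-hM) 0)) {τ : ℝ}
    (hτ : τ ∈ Icc (-hM) (0 : ℝ)) : ‖φ τ‖ ≤ segSup hM φ := by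
  refine le_ciSup (f := fun τ : Icc (-hM) (0 : ℝ) => ‖φ τ‖) ?_ ⟨τ, hτ⟩
  simpa only [image_eq_range] using isCompact_Icc.bddAbove_image hφ.norm

end SegSup

def SegLipschitzOn {n r : ℕ} (hM L : ℝ) (A : Set (Fin r → ℝ))
    (f : (Fin r → ℝ) → (ℝ → EuclideanSpace ℝ (Fin n)) → EuclideanSpace ℝ (Fin n)) : Prop :=
  ∀ ξ ∈ A, ∀ φ ψ : ℝ → EuclideanSpace ℝ (Fin n),
    ‖f ξ φ - f ξ ψ‖ ≤ L * segSup hM (fun τ => φ τ - ψ τ)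

def SegContinuous {n r : ℕ} (hM : ℝ)
    (f : (Fin r → ℝ) → (ℝ → EuclideanSpace ℝ (Fin n)) → EuclideanSpace ℝ (Fin n)) : Prop :=
  Continuous fun p : (Fin r → ℝ) × C(Icc (-hM) (0 : ℝ), EuclideanSpace ℝ (Fin n)) =>
    f p.1 (fun τ => if h : τ ∈ Icc (-hM) (0 : ℝ) then p.2 ⟨τ, h⟩ else 0)

/-- The window of `u` at `s` is cut off by `0` outside `[-h_M, 0]` so that `SegContinuous`
applies; for `ζ s ∈ A` this does not change the value (`windowField_eq`). -/
noncomputable def windowField {n r : ℕ} (hM : ℝ)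
    (f : (Fin r → ℝ) → (ℝ → EuclideanSpace ℝ (Fin n)) → EuclideanSpace ℝ (Fin n))
    (ζ : ℝ → Fin r → ℝ) (u : ℝ → EuclideanSpace ℝ (Fin n)) : ℝ → EuclideanSpace ℝ (Fin n) :=
  fun s => f (ζ s) (fun τ => if τ ∈ Icc (-hM) (0 : ℝ) then u (s + τ) else 0)

section WindowField

variable {n r : ℕ} {hM L : ℝ} {A : Set (Fin r → ℝ)}
  {f : (Fin r → ℝ) → (ℝ → EuclideanSpace ℝ (Fin n)) → EuclideanSpace ℝ (Fin n)}
  {ζ : ℝ → Fin r → ℝ}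

local notation "E" => EuclideanSpace ℝ (Fin n)

lemma SegLipschitzOn.apply_eq (hf : SegLipschitzOn hM L A f) (hhM : 0 ≤ hM) {ξ : Fin r → ℝ}
    (hξ : ξ ∈ A) {φ ψ : ℝ → E} (h : EqOn φ ψ (Icc (-hM) 0)) : f ξ φ = f ξ ψ := by
  have hsup : segSup hM (fun τ => φ τ - ψ τ) = 0 :=
    (segSup_le hhM fun τ hτ => by simp [h hτ]).antisymm (segSup_nonneg _)
  simpa [hsup, sub_eq_zero] using hf ξ hξ φ ψ

lemma SegLipschitzOn.norm_apply_sub_le (hf : SegLipschitzOn hM L A f) (hhM : 0 ≤ hM)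
    (hL : 0 ≤ L) {ξ : Fin r → ℝ} (hξ : ξ ∈ A) {φ ψ : ℝ → E} {C : ℝ}
    (h : ∀ τ ∈ Icc (-hM) (0 : ℝ), ‖φ τ - ψ τ‖ ≤ C) : ‖f ξ φ - f ξ ψ‖ ≤ L * C :=
  (hf ξ hξ φ ψ).trans (mul_le_mul_of_nonneg_left (segSup_le hhM h) hL)

lemma SegLipschitzOn.norm_apply_le (hf : SegLipschitzOn hM L A f)
    (hf0 : ∀ ξ ∈ A, f ξ (fun _ => 0) = 0) (hhM : 0 ≤ hM) (hL : 0 ≤ L) {ξ : Fin r → ℝ}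
    (hξ : ξ ∈ A) {φ : ℝ → E} {C : ℝ} (h : ∀ τ ∈ Icc (-hM) (0 : ℝ), ‖φ τ‖ ≤ C) :
    ‖f ξ φ‖ ≤ L * C := by
  simpa [hf0 ξ hξ] using hf.norm_apply_sub_le hhM hL hξ (ψ := fun _ => 0) (by simpa using h)

lemma continuous_windowField (hf : SegContinuous hM f) (hζ : Continuous ζ) {u : ℝ → E}
    (hu : Continuous u) : Continuous (windowField hM f ζ u) := by
  let window : C(ℝ, C(Icc (-hM) (0 : ℝ), E)) :=
    ContinuousMap.curry ⟨fun p : ℝ × Icc (-hM) (0 : ℝ) => u (p.1 + p.2), by fun_prop⟩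
  exact hf.comp (hζ.prodMk window.continuous)

lemma windowField_eq (hf : SegLipschitzOn hM L A f) (hhM : 0 ≤ hM) {u v : ℝ → E} {s : ℝ}
    (hζ : ζ s ∈ A) (h : ∀ τ ∈ Icc (-hM) (0 : ℝ), u (s + τ) = v (s + τ)) :
    windowField hM f ζ u s = f (ζ s) (seg v s) :=
  hf.apply_eq hhM hζ fun τ hτ => by simp [hτ, seg, h τ hτ]

lemma windowField_zero (hf0 : ∀ ξ ∈ A, f ξ (fun _ => 0) = 0) {s : ℝ} (hζ : ζ s ∈ A) :
    windowField hM f ζ 0 s = 0 := by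
  simpa [windowField] using hf0 _ hζ

lemma norm_windowField_sub_le (hf : SegLipschitzOn hM L A f) (hhM : 0 ≤ hM) (hL : 0 ≤ L)
    {u v : ℝ → E} {s C : ℝ} (hζ : ζ s ∈ A)
    (h : ∀ τ ∈ Icc (-hM) (0 : ℝ), ‖u (s + τ) - v (s + τ)‖ ≤ C) :
    ‖windowField hM f ζ u s - windowField hM f ζ v s‖ ≤ L * C :=
  hf.norm_apply_sub_le hhM hL hζ fun τ hτ => by simpa [hτ] using h τ hτ

end WindowField

theorem TendstoUniformlyOn.of_norm_sub_le_summable {β F : Type*} [NormedAddCommGroup F]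
    [CompleteSpace F] {X : ℕ → β → F} {b : ℕ → ℝ} (hb : Summable b) {s : Set β}
    (h : ∀ k, ∀ w ∈ s, ‖X (k + 1) w - X k w‖ ≤ b k) :
    TendstoUniformlyOn X (fun w => X 0 w + ∑' k, (X (k + 1) w - X k w)) atTop s := by
  rw [Metric.tendstoUniformlyOn_iff]
  intro ε hε
  filter_upwards [Metric.tendstoUniformlyOn_iff.1 (tendstoUniformlyOn_tsum_nat hb h) ε hε]
    with N hN w hw
  rw [add_comm]
  simpa [Finset.sum_range_sub (fun k => X k w)] using hN w hw

noncomputable def picardStep {n r : ℕ} (hM : ℝ)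
    (f : (Fin r → ℝ) → (ℝ → EuclideanSpace ℝ (Fin n)) → EuclideanSpace ℝ (Fin n))
    (ζ : ℝ → Fin r → ℝ) (x₀ u : ℝ → EuclideanSpace ℝ (Fin n)) : ℝ → EuclideanSpace ℝ (Fin n) :=
  fun t => x₀ (min t 0) + ∫ s in (0 : ℝ)..max t 0, windowField hM f ζ u s

section Picard

variable {n r : ℕ} {hM L : ℝ} {A : Set (Fin r → ℝ)}
  {f : (Fin r → ℝ) → (ℝ → EuclideanSpace ℝ (Fin n)) → EuclideanSpace ℝ (Fin n)}
  {ζ : ℝ → Fin r → ℝ} {x₀ : ℝ → EuclideanSpace ℝ (Fin n)}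

local notation "E" => EuclideanSpace ℝ (Fin n)

lemma continuous_picardStep (hf : SegContinuous hM f) (hζ : Continuous ζ) (hx₀ : Continuous x₀)
    {u : ℝ → E} (hu : Continuous u) : Continuous (picardStep hM f ζ x₀ u) := by
  have hF := continuous_windowField hf hζ hu
  exact (hx₀.comp (by fun_prop)).add
    ((intervalIntegral.continuous_primitive (fun a b => hF.intervalIntegrable a b) 0).comp
      (by fun_prop))

lemma picardStep_of_nonpos (u : ℝ → E) {t : ℝ} (ht : t ≤ 0) : picardStep hM f ζ x₀ u t = x₀ t := by
  simp [picardStep, min_eq_left ht, max_eq_right ht]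

lemma picardStep_of_nonneg (u : ℝ → E) {t : ℝ} (ht : 0 ≤ t) :
    picardStep hM f ζ x₀ u t = x₀ 0 + ∫ s in (0 : ℝ)..t, windowField hM f ζ u s := by
  simp [picardStep, min_eq_right ht, max_eq_left ht]

lemma norm_picardStep_zero_le (hf0 : ∀ ξ ∈ A, f ξ (fun _ => 0) = 0)
    (hζA : ∀ t ≥ (0 : ℝ), ζ t ∈ A) {C : ℝ} (hx₀ : ∀ t, ‖x₀ t‖ ≤ C) (t : ℝ) :
    ‖picardStep hM f ζ x₀ 0 t‖ ≤ C := by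
  have hzero : ∫ s in (0 : ℝ)..max t 0, windowField hM f ζ 0 s = 0 := by
    refine (intervalIntegral.integral_congr fun s hs => ?_).trans intervalIntegral.integral_zero
    rw [uIcc_of_le (le_max_right t 0)] at hs
    exact windowField_zero hf0 (hζA s hs.1)
  simpa [picardStep, hzero] using hx₀ (min t 0)

lemma norm_picardStep_sub_le (hfc : SegContinuous hM f) (hf : SegLipschitzOn hM L A f)
    (hhM : 0 ≤ hM) (hL : 0 ≤ L) (hζc : Continuous ζ) (hζA : ∀ t ≥ (0 : ℝ), ζ t ∈ A)
    {u v : ℝ → E} (hu : Continuous u) (hv : Continuous v) {c : ℝ} (hc : 0 ≤ c) {k : ℕ}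
    (h : ∀ w, ‖u w - v w‖ ≤ c * max w 0 ^ k) (t : ℝ) :
    ‖picardStep hM f ζ x₀ u t - picardStep hM f ζ x₀ v t‖
      ≤ L * c * max t 0 ^ (k + 1) / (k + 1) := by
  rcases le_or_gt t 0 with ht | ht
  · simp [picardStep_of_nonpos _ ht, max_eq_right ht]
  have hFu := continuous_windowField hfc hζc hu
  have hFv := continuous_windowField hfc hζc hv
  have hpt : ∀ s ∈ Ioc 0 t, ‖windowField hM f ζ u s - windowField hM f ζ v s‖ ≤ L * c * s ^ k := by
    intro s hs
    rw [mul_assoc]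
    refine norm_windowField_sub_le hf hhM hL (hζA s hs.1.le) fun τ hτ => (h _).trans ?_
    gcongr
    exact max_le (by linarith [hτ.2]) hs.1.le
  rw [picardStep_of_nonneg _ ht.le, picardStep_of_nonneg _ ht.le, add_sub_add_left_eq_sub,
    ← intervalIntegral.integral_sub (hFu.intervalIntegrable _ _) (hFv.intervalIntegrable _ _),
    max_eq_left ht.le]
  have hbound : Continuous fun s : ℝ => L * c * s ^ k := by fun_prop
  calc _ ≤ ∫ s in (0 : ℝ)..t, L * c * s ^ k :=
        intervalIntegral.norm_integral_le_of_norm_le ht.le (.of_forall hpt)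
          (hbound.intervalIntegrable _ _)
    _ = L * c * t ^ (k + 1) / (k + 1) := by
        rw [intervalIntegral.integral_const_mul, integral_pow]
        simp [mul_div_assoc]

lemma continuous_iterate_picardStep (hfc : SegContinuous hM f) (hζc : Continuous ζ)
    {x₀ : ℝ → E} (hx₀ : Continuous x₀) (k : ℕ) : Continuous ((picardStep hM f ζ x₀)^[k] 0) := by
  induction k with
  | zero => exact continuous_const
  | succ k ih =>
    rw [Function.iterate_succ_apply']
    exact continuous_picardStep hfc hζc hx₀ ih

lemma norm_iterate_picardStep_succ_sub_le (hfc : SegContinuous hM f) (hf : SegLipschitzOn hM L A f)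
    (hf0 : ∀ ξ ∈ A, f ξ (fun _ => 0) = 0) (hhM : 0 ≤ hM) (hL : 0 ≤ L) (hζc : Continuous ζ)
    (hζA : ∀ t ≥ (0 : ℝ), ζ t ∈ A) (hx₀c : Continuous x₀) {C : ℝ} (hC : 0 ≤ C)
    (hx₀ : ∀ t, ‖x₀ t‖ ≤ C) (k : ℕ) (t : ℝ) :
    ‖(picardStep hM f ζ x₀)^[k + 1] 0 t - (picardStep hM f ζ x₀)^[k] 0 t‖
      ≤ C * (L * max t 0) ^ k / k.factorial := by
  induction k generalizing t with
  | zero => simpa using norm_picardStep_zero_le hf0 hζA hx₀ t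
  | succ k ih =>
    have h := norm_picardStep_sub_le (x₀ := x₀) hfc hf hhM hL hζc hζA
      (continuous_iterate_picardStep hfc hζc hx₀c (k + 1))
      (continuous_iterate_picardStep hfc hζc hx₀c k)
      (c := C * L ^ k / k.factorial) (by positivity) (k := k)
      (fun w => (ih w).trans_eq (by ring)) t
    rw [Function.iterate_succ_apply' _ k] at h
    rw [Function.iterate_succ_apply' _ (k + 1), Function.iterate_succ_apply' _ k]
    refine h.trans_eq ?_
    rw [Nat.factorial_succ]
    push_cast
    field_simp
    ring

end Picard

section Existence

variable {n r : ℕ} {hM L : ℝ} {A : Set (Fin r → ℝ)}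
  {f : (Fin r → ℝ) → (ℝ → EuclideanSpace ℝ (Fin n)) → EuclideanSpace ℝ (Fin n)}
  {ζ : ℝ → Fin r → ℝ}

local notation "E" => EuclideanSpace ℝ (Fin n)

lemma TendstoUniformlyOn.windowField (hf : SegLipschitzOn hM L A f) (hhM : 0 ≤ hM) (hL : 0 ≤ L)
    {ι : Type*} {p : Filter ι} {X : ι → ℝ → E} {x : ℝ → E} {T : ℝ}
    (hζA : ∀ s ∈ Icc 0 T, ζ s ∈ A) (hX : TendstoUniformlyOn X x p (Iic T)) :
    TendstoUniformlyOn (fun k => windowField hM f ζ (X k)) (windowField hM f ζ x) p (Icc 0 T) := by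
  rw [Metric.tendstoUniformlyOn_iff] at hX ⊢
  intro ε hε
  have hδ : 0 < ε / (L + 1) := by positivity
  filter_upwards [hX _ hδ] with k hk s hs
  rw [dist_eq_norm]
  calc _ ≤ L * (ε / (L + 1)) :=
        norm_windowField_sub_le hf hhM hL (hζA s hs) fun τ hτ => by
          rw [← dist_eq_norm]
          exact (hk _ (show s + τ ≤ T by linarith [hs.2, hτ.2])).le
    _ < ε := by
        rw [mul_div_assoc', div_lt_iff₀ (by positivity)]
        linarith

lemma tendsto_picardStep (hfc : SegContinuous hM f) (hf : SegLipschitzOn hM L A f)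
    (hhM : 0 ≤ hM) (hL : 0 ≤ L) (hζc : Continuous ζ) (hζA : ∀ t ≥ (0 : ℝ), ζ t ∈ A)
    {x₀ : ℝ → E} {X : ℕ → ℝ → E} {x : ℝ → E} (hXc : ∀ k, Continuous (X k)) {t : ℝ}
    (hX : TendstoUniformlyOn X x atTop (Iic (max t 0))) :
    Tendsto (fun k => picardStep hM f ζ x₀ (X k) t) atTop (𝓝 (picardStep hM f ζ x₀ x t)) := by
  refine tendsto_const_nhds.add (TendstoUniformlyOn.tendsto_intervalIntegral_of_continuousOn
    (.of_forall fun k => (continuous_windowField hfc hζc (hXc k)).continuousOn) ?_)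
  rw [uIcc_of_le (le_max_right t 0)]
  exact hX.windowField hf hhM hL fun s hs => hζA s hs.1

lemma isFixedPt_picardStep_of_tendstoUniformlyOn (hfc : SegContinuous hM f)
    (hf : SegLipschitzOn hM L A f) (hhM : 0 ≤ hM) (hL : 0 ≤ L) (hζc : Continuous ζ)
    (hζA : ∀ t ≥ (0 : ℝ), ζ t ∈ A) {x₀ : ℝ → E} {X : ℕ → ℝ → E} {x : ℝ → E}
    (hXc : ∀ k, Continuous (X k)) (hstep : ∀ k, X (k + 1) = picardStep hM f ζ x₀ (X k))
    (hX : ∀ T, TendstoUniformlyOn X x atTop (Iic T)) :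
    Function.IsFixedPt (picardStep hM f ζ x₀) x := by
  funext t
  have hlim : Tendsto (fun k => X (k + 1) t) atTop (𝓝 (x t)) :=
    ((hX t).tendsto_at self_mem_Iic).comp (tendsto_add_atTop_nat 1)
  simp only [hstep] at hlim
  exact tendsto_nhds_unique (tendsto_picardStep hfc hf hhM hL hζc hζA hXc (hX _)) hlim

lemma isSolution_of_isFixedPt (hfc : SegContinuous hM f) (hf : SegLipschitzOn hM L A f)
    (hhM : 0 ≤ hM) (hζc : Continuous ζ) (hζA : ∀ t ≥ (0 : ℝ), ζ t ∈ A) {x₀ x₀' x : ℝ → E}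
    (hx : Continuous x) (hfix : Function.IsFixedPt (picardStep hM f ζ x₀') x)
    (h₀ : EqOn x₀' x₀ (Icc (-hM) 0)) : IsSolution hM f ζ x₀ x := by
  refine ⟨hx.continuousOn, fun τ hτ => ?_, fun t ht => ?_⟩
  · rw [← hfix, picardStep_of_nonpos _ hτ.2]
    exact h₀ hτ
  have hF := continuous_windowField hfc hζc hx
  have hint : ∀ w ∈ Ici t, x w = x₀' 0 + ∫ s in (0 : ℝ)..w, windowField hM f ζ x s :=
    fun w hw => by rw [← picardStep_of_nonneg _ (ht.trans hw), hfix]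
  have hderiv := (intervalIntegral.integral_hasDerivAt_right (hF.intervalIntegrable 0 t)
    (hF.stronglyMeasurableAtFilter _ _) hF.continuousAt).const_add (x₀' 0)
  rw [← windowField_eq hf hhM (hζA t ht) fun _ _ => rfl]
  exact hderiv.hasDerivWithinAt.congr hint (hint t self_mem_Ici)

theorem exists_isSolution (hfc : SegContinuous hM f) (hf : SegLipschitzOn hM L A f)
    (hf0 : ∀ ξ ∈ A, f ξ (fun _ => 0) = 0) (hhM : 0 ≤ hM) (hL : 0 ≤ L) (hζc : Continuous ζ)
    (hζA : ∀ t ≥ (0 : ℝ), ζ t ∈ A) {x₀ : ℝ → E} (hx₀ : ContinuousOn x₀ (Icc (-hM) 0)) :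
    ∃ x, IsSolution hM f ζ x₀ x := by
  let x₀' : ℝ → E := IccExtend (neg_nonpos.2 hhM) ((Icc (-hM) 0).domRestrict x₀)
  have hx₀'c : Continuous x₀' := continuous_IccExtend_iff.2 hx₀.domRestrict
  have hx₀'le : ∀ t, ‖x₀' t‖ ≤ segSup hM x₀ := fun t => le_segSup hx₀ (projIcc _ _ _ t).2
  let X : ℕ → ℝ → E := fun k => (picardStep hM f ζ x₀')^[k] 0
  have hXc := continuous_iterate_picardStep hfc hζc hx₀'c
  have hX : ∀ T,
      TendstoUniformlyOn X (fun w => X 0 w + ∑' k, (X (k + 1) w - X k w)) atTop (Iic T) :=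
    fun T => .of_norm_sub_le_summable (b := fun k => segSup hM x₀ * (L * max T 0) ^ k / k.factorial)
      (by simpa only [mul_div_assoc] using (Real.summable_pow_div_factorial _).mul_left _)
      fun k w (hw : w ≤ T) => (norm_iterate_picardStep_succ_sub_le hfc hf hf0 hhM hL hζc hζA hx₀'c
        (segSup_nonneg x₀) hx₀'le k w).trans (by gcongr; exact segSup_nonneg x₀)
  refine ⟨_, isSolution_of_isFixedPt hfc hf hhM hζc hζA ?_
    (isFixedPt_picardStep_of_tendstoUniformlyOn hfc hf hhM hL hζc hζA hXc
      (fun k => Function.iterate_succ_apply' _ k 0) hX) fun τ hτ => IccExtend_of_mem _ _ hτ⟩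
  refine continuous_iff_continuousAt.2 fun t => ((hX (t + 1)).continuousOn ?_).continuousAt
    (Iic_mem_nhds (lt_add_one t))
  exact (Eventually.of_forall fun k => (hXc k).continuousOn).frequently

end Existence

/-- Grönwall applied to `u t = s₀ + ∫₀ᵗ ‖g‖`, which is nondecreasing and dominates `‖x‖` on the
whole window `[t - h_M, t]`, so that `u' = ‖g‖ ≤ L u`. -/
lemma norm_le_exp_of_delay_bound {F : Type*} [NormedAddCommGroup F] [NormedSpace ℝ F]
    {x g : ℝ → F} (hg : Continuous g) {hM L s₀ : ℝ} (hhM : 0 ≤ hM) (hL : 0 ≤ L)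
    (hx₀ : ∀ w ∈ Icc (-hM) (0 : ℝ), ‖x w‖ ≤ s₀)
    (hx : ∀ t ≥ (0 : ℝ), x t = x 0 + ∫ s in (0 : ℝ)..t, g s)
    (hgx : ∀ t ≥ (0 : ℝ), ∀ C, (∀ τ ∈ Icc (-hM) (0 : ℝ), ‖x (t + τ)‖ ≤ C) → ‖g t‖ ≤ L * C)
    {t : ℝ} (ht : 0 ≤ t) : ‖x t‖ ≤ s₀ * exp (L * t) ∧ ‖g t‖ ≤ L * (s₀ * exp (L * t)) := by
  set u : ℝ → ℝ := fun t => s₀ + ∫ s in (0 : ℝ)..t, ‖g s‖ with hu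
  have hgi : ∀ a b : ℝ, IntervalIntegrable (fun s => ‖g s‖) volume a b :=
    fun a b => hg.norm.intervalIntegrable a b
  have hs₀ : 0 ≤ s₀ := (norm_nonneg _).trans (hx₀ 0 ⟨by linarith, le_rfl⟩)
  have hu_mono : MonotoneOn u (Ici 0) := fun a ha b _ hab =>
    add_le_add le_rfl (intervalIntegral.integral_mono_interval le_rfl ha hab
      (.of_forall fun s => norm_nonneg (g s)) (hgi 0 b))
  have hs₀u : ∀ t ≥ (0 : ℝ), s₀ ≤ u t := fun t ht =>
    (show u 0 = s₀ by simp [hu]) ▸ hu_mono self_mem_Ici ht ht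
  have hxu : ∀ t ≥ (0 : ℝ), ‖x t‖ ≤ u t := fun t ht =>
    calc ‖x t‖ ≤ ‖x 0‖ + ‖∫ s in (0 : ℝ)..t, g s‖ := by rw [hx t ht]; exact norm_add_le _ _
      _ ≤ u t := add_le_add (hx₀ 0 ⟨by linarith, le_rfl⟩)
          (intervalIntegral.norm_integral_le_integral_norm ht)
  have hgu : ∀ t ≥ (0 : ℝ), ‖g t‖ ≤ L * u t := fun t ht => hgx t ht _ fun τ hτ => by
    rcases le_or_gt (t + τ) 0 with hw | hw
    · exact (hx₀ _ ⟨by linarith [hτ.1], hw⟩).trans (hs₀u t ht)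
    · exact (hxu _ hw.le).trans (hu_mono hw.le ht (by linarith [hτ.2]))
  have hu_exp : u t ≤ s₀ * exp (L * t) := by
    have hderiv : ∀ s ∈ Ico (0 : ℝ) t, HasDerivWithinAt u ‖g s‖ (Ici s) s := fun s _ =>
      ((intervalIntegral.integral_hasDerivAt_right (hgi 0 s)
        (hg.norm.stronglyMeasurableAtFilter _ _) hg.norm.continuousAt).const_add
          s₀).hasDerivWithinAt
    have hucont : Continuous u := continuous_const.add (intervalIntegral.continuous_primitive hgi 0)
    have := norm_le_gronwallBound_of_norm_deriv_right_le (δ := s₀) (K := L) (ε := 0)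
      hucont.continuousOn hderiv
      (by simp [hu, abs_of_nonneg hs₀]) (fun s hs => ?_) t ⟨ht, le_rfl⟩
    · rwa [sub_zero, gronwallBound_ε0, Real.norm_of_nonneg (hs₀.trans (hs₀u t ht))] at this
    · rw [norm_norm, Real.norm_of_nonneg (hs₀.trans (hs₀u s hs.1)), add_zero]
      exact hgu s hs.1
  exact ⟨(hxu t ht).trans hu_exp, (hgu t ht).trans (mul_le_mul_of_nonneg_left hu_exp hL)⟩

section Stability

variable {n r : ℕ} {hM L : ℝ} {A : Set (Fin r → ℝ)}
  {f : (Fin r → ℝ) → (ℝ → EuclideanSpace ℝ (Fin n)) → EuclideanSpace ℝ (Fin n)}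
  {ζ : ℝ → Fin r → ℝ} {x₀ x : ℝ → EuclideanSpace ℝ (Fin n)}

local notation "E" => EuclideanSpace ℝ (Fin n)

lemma IsSolution.shift (hx : IsSolution hM f ζ x₀ x) {a : ℝ} (ha : 0 ≤ a) :
    IsSolution hM f (fun t => ζ (t + a)) (fun τ => x (τ + a)) (fun τ => x (τ + a)) := by
  obtain ⟨hxc, -, hxd⟩ := hx
  refine ⟨hxc.comp (by fun_prop) fun τ (hτ : -hM ≤ τ) => show -hM ≤ τ + a by linarith,
    fun _ _ => rfl, fun t ht => ?_⟩
  have hseg : seg (fun τ => x (τ + a)) t = seg x (t + a) :=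
    funext fun τ => congrArg x (add_right_comm t τ a)
  have hmaps : MapsTo (· + a) (Ici t) (Ici (t + a)) := fun s (hs : t ≤ s) =>
    show t + a ≤ s + a by linarith
  have := (hxd (t + a) (by linarith)).scomp t ((hasDerivAt_id t).add_const a).hasDerivWithinAt
    hmaps
  simpa [hseg, Function.comp_def] using this

lemma IsSolution.exists_integral_eq (hx : IsSolution hM f ζ x₀ x) (hfc : SegContinuous hM f)
    (hf : SegLipschitzOn hM L A f) (hhM : 0 ≤ hM) (hζc : Continuous ζ)
    (hζA : ∀ t ≥ (0 : ℝ), ζ t ∈ A) :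
    ∃ g : ℝ → E, Continuous g ∧ (∀ t ≥ (0 : ℝ), g t = f (ζ t) (seg x t)) ∧
      ∀ t ≥ (0 : ℝ), x t = x 0 + ∫ s in (0 : ℝ)..t, g s := by
  obtain ⟨hxc, -, hxd⟩ := hx
  have hxe : Continuous fun t => x (max t (-hM)) :=
    hxc.comp_continuous (by fun_prop) fun t => le_max_right t (-hM)
  have hg := continuous_windowField hfc hζc hxe
  have hgx : ∀ t ≥ (0 : ℝ), windowField hM f ζ (fun t => x (max t (-hM))) t = f (ζ t) (seg x t) :=
    fun t ht => windowField_eq hf hhM (hζA t ht) fun τ hτ => by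
      rw [max_eq_left (by linarith [hτ.1])]
  refine ⟨_, hg, hgx, fun t ht => ?_⟩
  rw [intervalIntegral.integral_eq_sub_of_hasDeriv_right_of_le ht
    (hxc.mono fun s hs => by simp only [mem_Ici]; linarith [hs.1])
    (fun s hs => ((hxd s hs.1.le).mono Ioi_subset_Ici_self).congr_deriv (hgx s hs.1.le).symm)
    (hg.intervalIntegrable _ _)]
  abel

lemma IsSolution.exists_integral_eq_and_norm_le_exp (hx : IsSolution hM f ζ x₀ x)
    (hx₀ : ContinuousOn x₀ (Icc (-hM) 0)) (hfc : SegContinuous hM f)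
    (hf : SegLipschitzOn hM L A f) (hf0 : ∀ ξ ∈ A, f ξ (fun _ => 0) = 0) (hhM : 0 ≤ hM)
    (hL : 0 ≤ L) (hζc : Continuous ζ) (hζA : ∀ t ≥ (0 : ℝ), ζ t ∈ A) :
    ∃ g : ℝ → E, Continuous g ∧ (∀ t ≥ (0 : ℝ), x t = x 0 + ∫ s in (0 : ℝ)..t, g s) ∧
      ∀ t ≥ (0 : ℝ), ‖x t‖ ≤ segSup hM x₀ * exp (L * t) ∧
        ‖g t‖ ≤ L * (segSup hM x₀ * exp (L * t)) := by
  obtain ⟨g, hg, hgx, hint⟩ := hx.exists_integral_eq hfc hf hhM hζc hζA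
  refine ⟨g, hg, hint, fun t ht => norm_le_exp_of_delay_bound hg hhM hL (fun w hw => ?_) hint
    (fun t ht C hC => ?_) ht⟩
  · rw [hx.2.1 w hw]
    exact le_segSup hx₀ hw
  · rw [hgx t ht]
    exact hf.norm_apply_le hf0 hhM hL (hζA t ht) hC

lemma inW_comp_add {x g : ℝ → E} (hg : Continuous g)
    (hx : ∀ t ≥ (0 : ℝ), x t = x 0 + ∫ s in (0 : ℝ)..t, g s) {a : ℝ} (ha : hM ≤ a) :
    InW hM (fun τ => x (τ + a)) (fun s => g (s + a)) := by
  have hga : Continuous fun s => g (s + a) := hg.comp (by fun_prop)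
  refine ⟨?_, hga.integrableOn_Icc, fun τ hτ => ?_, (hga.norm.pow 2).integrableOn_Icc⟩
  · refine (continuous_const.add ((intervalIntegral.continuous_primitive
      (fun a b => hg.intervalIntegrable a b) 0).comp (continuous_add_const a))).continuousOn.congr
      fun τ hτ => hx _ (by linarith [hτ.1])
  · show x (0 + a) - x (τ + a) = _
    rw [intervalIntegral.integral_comp_add_right g a, zero_add,
      hx a (by linarith [hτ.1, hτ.2]), hx (τ + a) (by linarith [hτ.1]), add_sub_add_left_eq_sub,
      intervalIntegral.integral_interval_sub_left (hg.intervalIntegrable _ _)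
        (hg.intervalIntegrable _ _)]

lemma Wnorm_le {x₀ g : ℝ → E} (hW : InW hM x₀ g) (hhM : 0 ≤ hM) {B : ℝ} (hB : 0 ≤ B)
    (h₀ : ‖x₀ 0‖ ≤ B) (hg : ∀ s ∈ Icc (-hM) (0 : ℝ), ‖g s‖ ≤ L * B) :
    Wnorm hM x₀ g ≤ √(1 + hM * L ^ 2) * B := by
  have hint : ∫ s in (-hM)..0, ‖g s‖ ^ 2 ≤ hM * (L * B) ^ 2 := by
    calc _ ≤ ∫ s in (-hM)..0, (L * B) ^ 2 :=
          intervalIntegral.integral_mono_on (by linarith)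
            ((intervalIntegrable_iff_integrableOn_Icc_of_le (by linarith)).2 hW.2.2.2)
            intervalIntegrable_const
            fun s hs => pow_le_pow_left₀ (norm_nonneg _) (hg s hs) 2
      _ = hM * (L * B) ^ 2 := by simp
  calc Wnorm hM x₀ g ≤ √((1 + hM * L ^ 2) * B ^ 2) :=
        Real.sqrt_le_sqrt (by nlinarith [pow_le_pow_left₀ (norm_nonneg _) h₀ 2])
    _ = √(1 + hM * L ^ 2) * B := by rw [Real.sqrt_mul (by positivity), Real.sqrt_sq hB]

end Stability

theorem W_stability_implies_C0_stability_general {n r : ℕ} (hM L R : ℝ)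
    (hhM : 0 < hM) (hL : 0 < L)
    (A : Set (Fin r → ℝ))
    (f : (Fin r → ℝ) → (ℝ → EuclideanSpace ℝ (Fin n)) → EuclideanSpace ℝ (Fin n))
    (hfcont : Continuous fun p : (Fin r → ℝ) × C(Set.Icc (-hM) (0:ℝ), EuclideanSpace ℝ (Fin n)) =>
      f p.1 (fun τ => if h : τ ∈ Set.Icc (-hM) (0:ℝ) then p.2 ⟨τ, h⟩ else 0))
    (hf0 : ∀ ξ ∈ A, f ξ (fun _ => 0) = 0)
    (hfLip : ∀ ξ ∈ A, ∀ φ ψ : ℝ → EuclideanSpace ℝ (Fin n),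
      ‖f ξ φ - f ξ ψ‖ ≤ L * segSup hM (fun τ => φ τ - ψ τ))
    (H : Set (ℝ → Fin r → ℝ)) (hHfi : FwdInv H)
    (hHcont : ∀ ζ ∈ H, Continuous ζ) (hHA : ∀ ζ ∈ H, ∀ t ≥ (0:ℝ), ζ t ∈ A)
    (α : ℝ → ℝ) (hα : ClassK α)
    (hWstab : ∀ x₀ g, InW hM x₀ g → Wnorm hM x₀ g < R → ∀ ζ ∈ H,
      (∃ x, IsSolution hM f ζ x₀ x) ∧
      ∀ x, IsSolution hM f ζ x₀ x → ∀ t ≥ (0:ℝ), ‖x t‖ ≤ α (Wnorm hM x₀ g)) :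
    ∀ x₀ : ℝ → EuclideanSpace ℝ (Fin n), ContinuousOn x₀ (Set.Icc (-hM) 0) →
      segSup hM x₀ < R / ((1 + Real.exp (L * hM)) * Real.sqrt (1 + hM * L ^ 2)) →
      ∀ ζ ∈ H,
        (∃ x, IsSolution hM f ζ x₀ x) ∧
        ∀ x, IsSolution hM f ζ x₀ x → ∀ t ≥ (0:ℝ),
          ‖x t‖ ≤ max
            (α ((1 + Real.exp (L * hM)) * Real.sqrt (1 + hM * L ^ 2) * segSup hM x₀))
            ((1 + Real.exp (L * hM)) * segSup hM x₀) := by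
  intro x₀ hx₀ hsmall ζ hζ
  refine ⟨exists_isSolution hfcont hfLip hf0 hhM.le hL.le (hHcont ζ hζ) (hHA ζ hζ) hx₀,
    fun x hx t ht => ?_⟩
  obtain ⟨g, hg, hint, hbound⟩ := hx.exists_integral_eq_and_norm_le_exp hx₀ hfcont hfLip hf0
    hhM.le hL.le (hHcont ζ hζ) (hHA ζ hζ)
  set s₀ := segSup hM x₀
  have hs₀ : 0 ≤ s₀ := segSup_nonneg x₀
  have hexp : ∀ s ∈ Icc 0 hM, s₀ * exp (L * s) ≤ s₀ * exp (L * hM) := fun s hs => by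
    gcongr
    exact hs.2
  have hK : s₀ * exp (L * hM) ≤ (1 + exp (L * hM)) * s₀ := by nlinarith
  rcases le_or_gt t hM with htM | htM
  · exact le_max_of_le_right (((hbound t ht).1.trans (hexp t ⟨ht, htM⟩)).trans hK)
  have hW := inW_comp_add (hM := hM) hg hint le_rfl
  have hWle : Wnorm hM _ _ ≤ (1 + exp (L * hM)) * √(1 + hM * L ^ 2) * s₀ :=
    (Wnorm_le hW hhM.le (by positivity) (by simpa using (hbound hM hhM.le).1) fun s hs =>
      (hbound _ (by linarith [hs.1])).2.trans (mul_le_mul_of_nonneg_left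
        (hexp _ ⟨by linarith [hs.1], by linarith [hs.2]⟩) hL.le)).trans
      ((mul_le_mul_of_nonneg_left hK (Real.sqrt_nonneg _)).trans_eq (by ring))
  have hWR := hWle.trans_lt ((lt_div_iff₀' (by positivity)).1 hsmall)
  have hstab := (hWstab _ _ hW hWR _ (hHfi ζ hζ hM hhM)).2 _ (hx.shift hhM.le) (t - hM)
    (by linarith)
  rw [sub_add_cancel] at hstab
  exact le_max_of_le_left (hstab.trans (hα.2.1.monotoneOn (mem_Ici.2 (Real.sqrt_nonneg _))
    (mem_Ici.2 (by positivity)) hWle))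

/-- if the retarded system `ẋ = f(ζ(t), x_t)` is `(W,H)`-stable with
class-`K` function `α` and radius `R`, `f` is globally Lipschitz in its second
argument with constant `L` uniformly in the first, `f(·,0) = 0`, and `H` is forward
invariant, then the system is `(C⁰,H)`-stable with radius
`R̃ = R/((1+e^{L h_M})√(1+h_M L²))` and comparison function
`α̃(s) = max(α((1+e^{L h_M})√(1+h_M L²) s), (1+e^{L h_M}) s)`. -/
theorem W_stability_implies_C0_stability {n r : ℕ} (hM L R : ℝ)
    (hhM : 0 < hM) (hL : 0 < L) (hR : 0 < R)
    (A : Set (Fin r → ℝ))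
    (f : (Fin r → ℝ) → (ℝ → EuclideanSpace ℝ (Fin n)) → EuclideanSpace ℝ (Fin n))
    (hfcont : Continuous fun p : (Fin r → ℝ) × C(Set.Icc (-hM) (0:ℝ), EuclideanSpace ℝ (Fin n)) =>
      f p.1 (fun τ => if h : τ ∈ Set.Icc (-hM) (0:ℝ) then p.2 ⟨τ, h⟩ else 0))
    (hf0 : ∀ ξ ∈ A, f ξ (fun _ => 0) = 0)
    (hfLip : ∀ ξ ∈ A, ∀ φ ψ : ℝ → EuclideanSpace ℝ (Fin n),
      ‖f ξ φ - f ξ ψ‖ ≤ L * segSup hM (fun τ => φ τ - ψ τ))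
    (H : Set (ℝ → Fin r → ℝ)) (hHfi : FwdInv H)
    (hHcont : ∀ ζ ∈ H, Continuous ζ) (hHA : ∀ ζ ∈ H, ∀ t ≥ (0:ℝ), ζ t ∈ A)
    (α : ℝ → ℝ) (hα : ClassK α)
    (hWstab : ∀ x₀ g, InW hM x₀ g → Wnorm hM x₀ g < R → ∀ ζ ∈ H,
      (∃ x, IsSolution hM f ζ x₀ x) ∧
      ∀ x, IsSolution hM f ζ x₀ x → ∀ t ≥ (0:ℝ), ‖x t‖ ≤ α (Wnorm hM x₀ g)) :
    ∀ x₀ : ℝ → EuclideanSpace ℝ (Fin n), ContinuousOn x₀ (Set.Icc (-hM) 0) →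
      segSup hM x₀ < R / ((1 + Real.exp (L * hM)) * Real.sqrt (1 + hM * L ^ 2)) →
      ∀ ζ ∈ H,
        (∃ x, IsSolution hM f ζ x₀ x) ∧
        ∀ x, IsSolution hM f ζ x₀ x → ∀ t ≥ (0:ℝ),
          ‖x t‖ ≤ max
            (α ((1 + Real.exp (L * hM)) * Real.sqrt (1 + hM * L ^ 2) * segSup hM x₀))
            ((1 + Real.exp (L * hM)) * segSup hM x₀) :=
  W_stability_implies_C0_stability_general hM L R hhM hL A f hfcont hf0 hfLip H hHfi hHcont hHA α hα
    hWstab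
end
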